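/- Energy inequality for the intracellular equation: let Da, K, T > 0, φ ∈ (0,1), let c₁ : [0,1] × [0,T] → ℝ be continuous, and let c₂ : [0,1] × [0,T] → ℝ be such that c₂ and ∂_t c₂ are continuous on [0,1] × [0,T] and (1-φ)·∂_t c₂(x,t) + (Da/K)·c₂(x,t) = Da·c₁(x,t) for all (x,t) ∈ [0,1] × (0,T]. Then for every ε > 0 and every t ∈ (0,T]: ((1-φ)/2)·(d/dt)∫_0^1 c₂(x,t)² dx + (Da/K)·∫_0^1 c₂(x,t)² dx ≤ Da·ε·∫_0^1 c₁(x,t)² dx + (Da/(4ε))·∫_0^1 c₂(x,t)² dx. -/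

import Mathlib

/-!
Multiplying the equation by `c₂` gives `(1-φ)·c₂·∂ₜc₂ + (Da/K)·c₂² = Da·c₁·c₂` pointwise, and
Young's inequality `c₁·c₂ ≤ ε·c₁² + c₂²/(4ε)` turns this into the claimed inequality once it is
integrated over `x`. Differentiating under the integral sign, `d/dt ∫ c₂² = ∫ 2·c₂·∂ₜc₂`, is
justified by the mean value inequality: joint continuity of `∂ₜc₂` on a compact `x`-interval
bounds the difference quotients of `c₂(x, ·)` uniformly in `x`.
-/

open Set MeasureTheory

variable {E : Type*} [NormedAddCommGroup E] [NormedSpace ℝ E]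

theorem Convex.norm_image_sub_le_of_norm_hasDerivWithin_le' {f f' : ℝ → E} {s : Set ℝ}
    {x y C : ℝ} {v : E} (hf : ∀ z ∈ s, HasDerivWithinAt f (f' z) s z)
    (bound : ∀ z ∈ s, ‖f' z - v‖ ≤ C) (hs : Convex ℝ s) (xs : x ∈ s) (ys : y ∈ s) :
    ‖f y - f x - (y - x) • v‖ ≤ C * ‖y - x‖ := by
  have hg : ∀ z ∈ s, HasDerivWithinAt (fun σ => f σ - σ • v) (f' z - v) s z := fun z hz =>
    (hf z hz).sub (((hasDerivWithinAt_id z s).smul_const v).congr_deriv (one_smul ℝ v))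
  convert hs.norm_image_sub_le_of_norm_hasDerivWithin_le hg bound xs ys using 2
  rw [sub_smul]
  abel

theorem hasDerivWithinAt_intervalIntegral_of_continuousOn {f f' : ℝ → ℝ → E} {a b t : ℝ}
    {S : Set ℝ} (hS : Convex ℝ S)
    (hf'_cont : ContinuousOn (fun p : ℝ × ℝ => f' p.1 p.2) (uIcc a b ×ˢ S))
    (hf' : ∀ x ∈ uIcc a b, ∀ s ∈ S, HasDerivWithinAt (f x) (f' x s) S s)
    (hf_int : ∀ s ∈ S, IntervalIntegrable (fun x => f x s) volume a b) (ht : t ∈ S) :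
    HasDerivWithinAt (fun s => ∫ x in a..b, f x s) (∫ x in a..b, f' x t) S t := by
  rw [hasDerivWithinAt_iff_isLittleO, Asymptotics.isLittleO_iff]
  intro c hc
  set c' := c / (|b - a| + 1)
  have hc' : 0 < c' := by positivity
  -- `f' x s` is close to `f' x t` for `s` near `t`, uniformly in `x`, by compactness of `[a, b]`.
  obtain ⟨v, hv, hvf'⟩ := isCompact_uIcc.mem_uniformity_of_prod (f := fun s x => f' x s)
    (hf'_cont.comp continuous_swap.continuousOn fun p hp => ⟨hp.2, hp.1⟩) ht
    (Metric.dist_mem_uniformity hc')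
  obtain ⟨δ, hδ, hδv⟩ := Metric.mem_nhdsWithin_iff.mp hv
  filter_upwards [inter_mem_nhdsWithin S (Metric.ball_mem_nhds t hδ)] with s ⟨hsS, hsδ⟩
  have hpt : ∀ x ∈ uIcc a b, ‖f x s - f x t - (s - t) • f' x t‖ ≤ c' * ‖s - t‖ := fun x hx =>
    ((convex_ball t δ).inter hS).norm_image_sub_le_of_norm_hasDerivWithin_le'
      (fun σ hσ => (hf' x hx σ hσ.2).mono inter_subset_right)
      (fun σ hσ => (dist_eq_norm (f' x σ) (f' x t) ▸ hvf' σ (hδv hσ) x hx : _ < c').le)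
      ⟨Metric.mem_ball_self hδ, ht⟩ ⟨hsδ, hsS⟩
  have hsmul : IntervalIntegrable (fun x => (s - t) • f' x t) volume a b :=
    (ContinuousOn.uncurry_right t ht hf'_cont).intervalIntegrable.smul (s - t)
  rw [← intervalIntegral.integral_smul, ← intervalIntegral.integral_sub (hf_int s hsS)
    (hf_int t ht), ← intervalIntegral.integral_sub ((hf_int s hsS).sub (hf_int t ht)) hsmul]
  calc _ ≤ c' * ‖s - t‖ * |b - a| := intervalIntegral.norm_integral_le_of_norm_le_const
          fun x hx => hpt x (uIoc_subset_uIcc hx)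
    _ ≤ c * ‖s - t‖ := by
      rw [mul_right_comm]
      gcongr
      calc c' * |b - a| ≤ c' * (|b - a| + 1) := by gcongr; linarith
        _ = c := div_mul_cancel₀ c (by positivity)

theorem mul_le_mul_sq_add_sq_div {u w ε : ℝ} (hε : 0 < ε) :
    u * w ≤ ε * w ^ 2 + u ^ 2 / (4 * ε) := by
  have hsq : 0 ≤ (2 * ε * w - u) ^ 2 / (4 * ε) := by positivity
  have hexpand : (2 * ε * w - u) ^ 2 / (4 * ε) = ε * w ^ 2 + u ^ 2 / (4 * ε) - u * w := by
    field_simp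
    ring
  linarith

theorem energy_density_le {φ Da K ε u v w : ℝ} (hDa : 0 ≤ Da) (hε : 0 < ε)
    (h : (1 - φ) * v + Da / K * u = Da * w) :
    (1 - φ) / 2 * (2 * u * v) + Da / K * u ^ 2 ≤ Da * ε * w ^ 2 + Da / (4 * ε) * u ^ 2 := by
  calc (1 - φ) / 2 * (2 * u * v) + Da / K * u ^ 2 = Da * (u * w) := by
        linear_combination u * h
    _ ≤ Da * (ε * w ^ 2 + u ^ 2 / (4 * ε)) :=
        mul_le_mul_of_nonneg_left (mul_le_mul_sq_add_sq_div hε) hDa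
    _ = Da * ε * w ^ 2 + Da / (4 * ε) * u ^ 2 := by ring

theorem intracellular_equation_energy_inequality_general
    (Da K T φ : ℝ) (hDa : 0 < Da)
    (c₁ : ℝ → ℝ → ℝ)
    (hc₁ : ContinuousOn (fun p : ℝ × ℝ => c₁ p.1 p.2) (Set.Icc (0 : ℝ) 1 ×ˢ Set.Icc 0 T))
    (c₂ c₂t : ℝ → ℝ → ℝ)
    (hc₂ : ContinuousOn (fun p : ℝ × ℝ => c₂ p.1 p.2) (Set.Icc (0 : ℝ) 1 ×ˢ Set.Icc 0 T))
    (hc₂t : ContinuousOn (fun p : ℝ × ℝ => c₂t p.1 p.2) (Set.Icc (0 : ℝ) 1 ×ˢ Set.Icc 0 T))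
    (hdt : ∀ x ∈ Set.Icc (0 : ℝ) 1, ∀ t ∈ Set.Icc 0 T,
      HasDerivWithinAt (fun s => c₂ x s) (c₂t x t) (Set.Icc 0 T) t)
    (hode : ∀ x ∈ Set.Icc (0 : ℝ) 1, ∀ t ∈ Set.Ioc 0 T,
      (1 - φ) * c₂t x t + (Da / K) * c₂ x t = Da * c₁ x t) :
    ∀ ε > (0 : ℝ), ∀ t ∈ Set.Ioc 0 T,
      ∃ d : ℝ,
        HasDerivWithinAt (fun s => ∫ x in (0 : ℝ)..1, (c₂ x s) ^ 2) d (Set.Icc 0 T) t ∧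
        ((1 - φ) / 2) * d + (Da / K) * (∫ x in (0 : ℝ)..1, (c₂ x t) ^ 2) ≤
          Da * ε * (∫ x in (0 : ℝ)..1, (c₁ x t) ^ 2) +
            (Da / (4 * ε)) * ∫ x in (0 : ℝ)..1, (c₂ x t) ^ 2 := by
  intro ε hε t ht
  have ht' : t ∈ Icc 0 T := Ioc_subset_Icc_self ht
  have hdensity : ContinuousOn (fun p : ℝ × ℝ => 2 * c₂ p.1 p.2 * c₂t p.1 p.2)
      (Icc 0 1 ×ˢ Icc 0 T) := (continuousOn_const.mul hc₂).mul hc₂t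
  have hc₂_sq : ∀ s ∈ Icc 0 T, IntervalIntegrable (fun x => c₂ x s ^ 2) volume 0 1 :=
    fun s hs => ((hc₂.uncurry_right s hs).pow 2).intervalIntegrable_of_Icc zero_le_one
  have hc₁_sq : IntervalIntegrable (fun x => c₁ x t ^ 2) volume 0 1 :=
    ((hc₁.uncurry_right t ht').pow 2).intervalIntegrable_of_Icc zero_le_one
  have hdensity_t : IntervalIntegrable (fun x => 2 * c₂ x t * c₂t x t) volume 0 1 :=
    (hdensity.uncurry_right (f := fun x s => 2 * c₂ x s * c₂t x s) t ht').intervalIntegrable_of_Icc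
      zero_le_one
  refine ⟨∫ x in (0 : ℝ)..1, 2 * c₂ x t * c₂t x t, ?_, ?_⟩
  · rw [← uIcc_of_le zero_le_one] at hdensity hdt
    refine hasDerivWithinAt_intervalIntegral_of_continuousOn
      (f' := fun x s => 2 * c₂ x s * c₂t x s) (convex_Icc 0 T) hdensity (fun x hx s hs => ?_)
      hc₂_sq ht'
    simpa [mul_comm, mul_assoc] using (hdt x hx s hs).fun_pow 2
  · have hmono := intervalIntegral.integral_mono_on zero_le_one
      ((hdensity_t.const_mul ((1 - φ) / 2)).add ((hc₂_sq t ht').const_mul (Da / K)))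
      ((hc₁_sq.const_mul (Da * ε)).add ((hc₂_sq t ht').const_mul (Da / (4 * ε))))
      fun x hx => energy_density_le hDa.le hε (hode x hx t ht)
    rwa [intervalIntegral.integral_add (hdensity_t.const_mul _) ((hc₂_sq t ht').const_mul _),
      intervalIntegral.integral_add (hc₁_sq.const_mul _) ((hc₂_sq t ht').const_mul _),
      intervalIntegral.integral_const_mul, intervalIntegral.integral_const_mul,
      intervalIntegral.integral_const_mul, intervalIntegral.integral_const_mul] at hmono

/-- Energy inequality for the intracellular equation: if `c₂` solves
`(1-φ)·∂ₜc₂ + (Da/K)·c₂ = Da·c₁` on `[0,1] × (0,T]`, then for every `ε > 0` and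
`t ∈ (0,T]`:
`((1-φ)/2)·(d/dt)∫ c₂² + (Da/K)·∫ c₂² ≤ Da·ε·∫ c₁² + (Da/(4ε))·∫ c₂²`. -/
theorem intracellular_equation_energy_inequality
    (Da K T φ : ℝ) (hDa : 0 < Da) (hK : 0 < K) (hT : 0 < T)
    (hφ : φ ∈ Set.Ioo (0 : ℝ) 1)
    (c₁ : ℝ → ℝ → ℝ)
    (hc₁ : ContinuousOn (fun p : ℝ × ℝ => c₁ p.1 p.2) (Set.Icc (0 : ℝ) 1 ×ˢ Set.Icc 0 T))
    (c₂ c₂t : ℝ → ℝ → ℝ)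
    (hc₂ : ContinuousOn (fun p : ℝ × ℝ => c₂ p.1 p.2) (Set.Icc (0 : ℝ) 1 ×ˢ Set.Icc 0 T))
    (hc₂t : ContinuousOn (fun p : ℝ × ℝ => c₂t p.1 p.2) (Set.Icc (0 : ℝ) 1 ×ˢ Set.Icc 0 T))
    (hdt : ∀ x ∈ Set.Icc (0 : ℝ) 1, ∀ t ∈ Set.Icc 0 T,
      HasDerivWithinAt (fun s => c₂ x s) (c₂t x t) (Set.Icc 0 T) t)
    (hode : ∀ x ∈ Set.Icc (0 : ℝ) 1, ∀ t ∈ Set.Ioc 0 T,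
      (1 - φ) * c₂t x t + (Da / K) * c₂ x t = Da * c₁ x t) :
    ∀ ε > (0 : ℝ), ∀ t ∈ Set.Ioc 0 T,
      ∃ d : ℝ,
        HasDerivWithinAt (fun s => ∫ x in (0 : ℝ)..1, (c₂ x s) ^ 2) d (Set.Icc 0 T) t ∧
        ((1 - φ) / 2) * d + (Da / K) * (∫ x in (0 : ℝ)..1, (c₂ x t) ^ 2) ≤
          Da * ε * (∫ x in (0 : ℝ)..1, (c₁ x t) ^ 2) +
            (Da / (4 * ε)) * ∫ x in (0 : ℝ)..1, (c₂ x t) ^ 2 :=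
  intracellular_equation_energy_inequality_general Da K T φ hDa c₁ hc₁ c₂ c₂t hc₂ hc₂t hdt hode
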